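/- Safety for multiset policies: if N is a well-formed system (coherent and ⊢N:ok with multiset well-formedness), then for every trustworthy site l[M]{P1|...|Pn} in N where each Pi is a thread, Pi →σ Pi' implies that the multiset Sset(σ) of labels occurring in σ satisfies Sset(σ) ≤ M_p. -/

import Mathlib

universe u

/-! ## Basic framework: trust levels, agents, membranes, systems -/

/-- Trust levels: `loc` (unknown), `lgood`, `lbad`. -/
inductive TrustLev : Type where
  | loc : TrustLev
  | lgood : TrustLev
  | lbad : TrustLev
deriving DecidableEq

/-- The subtyping order `<:` on trust levels: it is reflexive and satisfies
`loc <: lgood` and `loc <: lbad`. -/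
def TrustLev.sub (t1 t2 : TrustLev) : Prop := t1 = t2 ∨ t1 = TrustLev.loc

/-- Agents, parametric on the type `Act` of basic actions, the type `Loc` of
localities, and the type `Pol` of policies (digests carried by `go`). -/
inductive Agent (Act Loc : Type) (Pol : Type u) where
  | nil : Agent Act Loc Pol
  | act : Act → Agent Act Loc Pol → Agent Act Loc Pol
  | go : Loc → Pol → Agent Act Loc Pol → Agent Act Loc Pol
  | par : Agent Act Loc Pol → Agent Act Loc Pol → Agent Act Loc Pol
  | repl : Agent Act Loc Pol → Agent Act Loc Pol

/-- A membrane: a trust function on localities together with a policy.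
(The partial trust function is modelled as a total function, the level `loc`
standing for ``unknown''.) -/
structure Membrane (Loc : Type) (Pol : Type u) where
  trust : Loc → TrustLev
  pol : Pol

/-- Systems: the empty system, a site `l[M]{P}`, or a parallel composition. -/
inductive System (Act Loc : Type) (Pol : Type u) where
  | empty : System Act Loc Pol
  | site : Loc → Membrane Loc Pol → Agent Act Loc Pol → System Act Loc Pol
  | par : System Act Loc Pol → System Act Loc Pol → System Act Loc Pol

variable {Act Loc : Type} {Pol : Type u}

/-- The list of sites (name and membrane) occurring in a system. -/
def System.sites : System Act Loc Pol → List (Loc × Membrane Loc Pol)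
  | System.empty => []
  | System.site l M _ => [(l, M)]
  | System.par N1 N2 => N1.sites ++ N2.sites

/-- A site named `l` with membrane `M` is trustworthy if `M_t(l) = lgood`. -/
def Trustworthy (l : Loc) (M : Membrane Loc Pol) : Prop :=
  M.trust l = TrustLev.lgood

/-- A system is coherent if `M^k_t(l) <: M^l_t(l)` for every trustworthy site `k`
and every site `l` of the system. -/
def Coherent (N : System Act Loc Pol) : Prop :=
  ∀ p ∈ N.sites, Trustworthy p.1 p.2 →
    ∀ q ∈ N.sites, TrustLev.sub (p.2.trust q.1) (q.2.trust q.1)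

/-- `SiteIn l M P N` holds when the site `l[M]{P}` occurs in the system `N`. -/
inductive SiteIn (l : Loc) (M : Membrane Loc Pol) (P : Agent Act Loc Pol) :
    System Act Loc Pol → Prop where
  | here : SiteIn l M P (System.site l M P)
  | left {N1 N2} : SiteIn l M P N1 → SiteIn l M P (System.par N1 N2)
  | right {N1 N2} : SiteIn l M P N2 → SiteIn l M P (System.par N1 N2)

/-- Structural equivalence on agents: `|` is commutative and associative with
unit `nil`, replication unfolds, and `≡` is a congruence for `|`. -/
inductive AgEq : Agent Act Loc Pol → Agent Act Loc Pol → Prop where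
  | refl (P) : AgEq P P
  | symm {P Q} : AgEq P Q → AgEq Q P
  | trans {P Q R} : AgEq P Q → AgEq Q R → AgEq P R
  | parNil (P) : AgEq (Agent.par P Agent.nil) P
  | parComm (P Q) : AgEq (Agent.par P Q) (Agent.par Q P)
  | parAssoc (P Q R) :
      AgEq (Agent.par (Agent.par P Q) R) (Agent.par P (Agent.par Q R))
  | replUnfold (P Q) :
      AgEq (Agent.par (Agent.repl P) Q) (Agent.par P (Agent.par (Agent.repl P) Q))
  | parCong {P P' Q Q'} : AgEq P P' → AgEq Q Q' → AgEq (Agent.par P Q) (Agent.par P' Q')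

/-- Structural equivalence on systems. -/
inductive StrEq : System Act Loc Pol → System Act Loc Pol → Prop where
  | refl (N) : StrEq N N
  | symm {N1 N2} : StrEq N1 N2 → StrEq N2 N1
  | trans {N1 N2 N3} : StrEq N1 N2 → StrEq N2 N3 → StrEq N1 N3
  | parEmpty (N) : StrEq (System.par N System.empty) N
  | parComm (N1 N2) : StrEq (System.par N1 N2) (System.par N2 N1)
  | parAssoc (N1 N2 N3) :
      StrEq (System.par (System.par N1 N2) N3) (System.par N1 (System.par N2 N3))
  | parCong {N1 N1' N2 N2'} :
      StrEq N1 N1' → StrEq N2 N2' → StrEq (System.par N1 N2) (System.par N1' N2')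
  | site (l M) {P Q} : AgEq P Q → StrEq (System.site l M P) (System.site l M Q)

/-- The reduction relation over systems, parametric on the `enforces`
relation `enf` between policies and on the typechecking relation `typ`
between agents and policies.  In rule `mig`, if the target site `l` trusts
the source site `k` then the digest `T` is checked against `l`'s policy,
otherwise the full code `P` is typechecked. -/
inductive Red (enf : Pol → Pol → Prop) (typ : Agent Act Loc Pol → Pol → Prop) :
    System Act Loc Pol → System Act Loc Pol → Prop where
  | act (l M a P Q) :
      Red enf typ (System.site l M (Agent.par (Agent.act a P) Q))
        (System.site l M (Agent.par P Q))
  | par {N1 N1'} (N2) :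
      Red enf typ N1 N1' → Red enf typ (System.par N1 N2) (System.par N1' N2)
  | struct {N N1 N1' N'} :
      StrEq N N1 → Red enf typ N1 N1' → StrEq N1' N' → Red enf typ N N'
  | mig (k Mk l Ml T P Q R) :
      (if Ml.trust k = TrustLev.lgood then enf T Ml.pol else typ P Ml.pol) →
      Red enf typ
        (System.par (System.site k Mk (Agent.par (Agent.go l T P) Q))
          (System.site l Ml R))
        (System.par (System.site k Mk Q) (System.site l Ml (Agent.par P R)))

/-- The labelled transition system over agents, with labels in `Act ⊕ Loc`. -/
inductive Step : Agent Act Loc Pol → (Act ⊕ Loc) → Agent Act Loc Pol → Prop where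
  | act (a P) : Step (Agent.act a P) (Sum.inl a) P
  | mig (l T P) : Step (Agent.go l T P) (Sum.inr l) Agent.nil
  | repl {P α P'} :
      Step (Agent.par P (Agent.repl P)) α P' → Step (Agent.repl P) α P'
  | parL {P1 α P1'} (P2) :
      Step P1 α P1' → Step (Agent.par P1 P2) α (Agent.par P1' P2)
  | parR {P1 α P1'} (P2) :
      Step P1 α P1' → Step (Agent.par P2 P1) α (Agent.par P2 P1')

/-- `Trace P σ P'` means `P →σ P'`: the composite of the single steps of `σ`. -/
inductive Trace : Agent Act Loc Pol → List (Act ⊕ Loc) → Agent Act Loc Pol → Prop where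
  | nil (P) : Trace P [] P
  | cons {P α P' σ P''} : Step P α P' → Trace P' σ P'' → Trace P (α :: σ) P''

/-- The thread components of an agent: every agent is `P1 | ... | Pn`
with each `Pi` a thread (not itself a parallel composition). -/
def Agent.comps : Agent Act Loc Pol → List (Agent Act Loc Pol)
  | Agent.par P Q => P.comps ++ Q.comps
  | P => [P]

/-- A thread is an agent which is not a parallel composition. -/
def Agent.IsThread : Agent Act Loc Pol → Prop
  | Agent.par _ _ => False
  | _ => True

/-! ## Multiset policies -/

/-- A multiset policy: a multiset over `Act ⊕ Loc` with multiplicities in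
`ℕ ∪ {ω}` (i.e. `ℕ∞`) and finite support.  Multiset sum is `+` (with `ω = ⊤`
absorbing) and multiset inclusion is the pointwise order `≤`. -/
abbrev MPolicy (Act Loc : Type) : Type := (Act ⊕ Loc) →₀ ℕ∞

/-- `T^ω`: the multiset assigning `ω` to every element of the support of `T`. -/
noncomputable def omegafy (T : MPolicy Act Loc) : MPolicy Act Loc :=
  Finsupp.mapRange (fun n => if n = 0 then 0 else (⊤ : ℕ∞)) (by simp) T

/-- Typechecking of agents against multiset policies, `⊢ P : T`. -/
inductive MTypes : Agent Act Loc (MPolicy Act Loc) → MPolicy Act Loc → Prop where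
  | nil (T) : MTypes Agent.nil T
  | act {a P T} :
      MTypes P T → MTypes (Agent.act a P) (T + Finsupp.single (Sum.inl a) 1)
  | go {l T' P T} :
      MTypes P T' → MTypes (Agent.go l T' P) (T + Finsupp.single (Sum.inr l) 1)
  | par {P Q T1 T2} :
      MTypes P T1 → MTypes Q T2 → MTypes (Agent.par P Q) (T1 + T2)
  | repl {P T T'} : MTypes P T → omegafy T ≤ T' → MTypes (Agent.repl P) T'

/-- `Sset σ`: the multiset of labels occurring in the trace `σ`. -/
noncomputable def Sset (σ : List (Act ⊕ Loc)) : MPolicy Act Loc :=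
  (σ.map fun α => Finsupp.single α (1 : ℕ∞)).sum

/-- Well-formedness of systems for multiset (entry) policies: at a trustworthy
site every thread component of the resident code typechecks against the
membrane's policy. -/
inductive OkM : System Act Loc (MPolicy Act Loc) → Prop where
  | empty : OkM System.empty
  | par {N1 N2} : OkM N1 → OkM N2 → OkM (System.par N1 N2)
  | siteU {l M P} : ¬ Trustworthy l M → OkM (System.site l M P)
  | siteG {l M P} :
      Trustworthy l M → (∀ Pi ∈ Agent.comps P, MTypes Pi M.pol) →
      OkM (System.site l M P)

/-! Each transition `P →α P'` of a typed agent `⊢ P : T` consumes one copy of `α` from the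
type: `⊢ P' : T'` for some `T'` with `{α} ∪ T' ≤ T`. The only non-structural case is
replication, where `P | !P` is typed by `T ∪ T^ω = T^ω`. Along a trace the consumed labels
therefore add up to at most the initial type, and at a trustworthy site well-formedness
types every thread by the membrane policy. -/

@[simp]
lemma Sset_nil : Sset ([] : List (Act ⊕ Loc)) = 0 := rfl

@[simp]
lemma Sset_cons (α : Act ⊕ Loc) (σ : List (Act ⊕ Loc)) :
    Sset (α :: σ) = Finsupp.single α 1 + Sset σ := by
  simp [Sset]

lemma add_omegafy_self (T : MPolicy Act Loc) : T + omegafy T = omegafy T := by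
  ext α
  by_cases h : T α = 0 <;> simp [omegafy, h]

namespace MTypes

lemma par_repl_of_repl {P : Agent Act Loc (MPolicy Act Loc)} {T : MPolicy Act Loc}
    (h : MTypes (Agent.repl P) T) :
    ∃ T', MTypes (Agent.par P (Agent.repl P)) T' ∧ T' ≤ T := by
  cases h with
  | repl hP hle => exact ⟨_, par hP (repl hP le_rfl), (add_omegafy_self _).trans_le hle⟩

lemma of_step {P P' : Agent Act Loc (MPolicy Act Loc)} {α : Act ⊕ Loc}
    (hs : Step P α P') {T : MPolicy Act Loc} (hT : MTypes P T) :
    ∃ T', MTypes P' T' ∧ Finsupp.single α 1 + T' ≤ T := by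
  induction hs generalizing T with
  | act =>
    obtain _ | ⟨hP⟩ := hT
    exact ⟨_, hP, (add_comm _ _).le⟩
  | mig =>
    obtain _ | _ | ⟨_⟩ := hT
    exact ⟨0, nil 0, by simp⟩
  | repl _ ih =>
    obtain ⟨Tu, hTu, hle⟩ := par_repl_of_repl hT
    obtain ⟨T', hT', hle'⟩ := ih hTu
    exact ⟨T', hT', hle'.trans hle⟩
  | parL _ _ ih =>
    obtain _ | _ | _ | ⟨h1, h2⟩ := hT
    obtain ⟨T', hT', hle⟩ := ih h1
    refine ⟨T' + _, par hT' h2, ?_⟩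
    rw [← add_assoc]
    exact add_le_add hle le_rfl
  | parR _ _ ih =>
    obtain _ | _ | _ | ⟨h1, h2⟩ := hT
    obtain ⟨T', hT', hle⟩ := ih h2
    refine ⟨_ + T', par h1 hT', ?_⟩
    rw [add_left_comm]
    exact add_le_add le_rfl hle

lemma Sset_le_of_trace {P P' : Agent Act Loc (MPolicy Act Loc)} {σ : List (Act ⊕ Loc)}
    (ht : Trace P σ P') {T : MPolicy Act Loc} (hT : MTypes P T) : Sset σ ≤ T := by
  induction ht generalizing T with
  | nil => simp
  | cons hs _ ih =>
    obtain ⟨T', hT', hle⟩ := of_step hs hT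
    rw [Sset_cons]
    exact (add_le_add le_rfl (ih hT')).trans hle

end MTypes

lemma OkM.mtypes_of_siteIn {N : System Act Loc (MPolicy Act Loc)} (hok : OkM N)
    {l : Loc} {M : Membrane Loc (MPolicy Act Loc)} {P : Agent Act Loc (MPolicy Act Loc)}
    (hsite : SiteIn l M P N) (htw : Trustworthy l M) :
    ∀ Pi ∈ P.comps, MTypes Pi M.pol := by
  induction hsite with
  | here =>
    cases hok with
    | siteU h => exact absurd htw h
    | siteG _ h => exact h
  | left _ ih => cases hok with | par h1 _ => exact ih h1
  | right _ ih => cases hok with | par _ h2 => exact ih h2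

theorem safety_multiset_general
    {N : System Act Loc (MPolicy Act Loc)}
    (hok : OkM N)
    {l : Loc} {M : Membrane Loc (MPolicy Act Loc)} {P : Agent Act Loc (MPolicy Act Loc)}
    (hsite : SiteIn l M P N) (htw : Trustworthy l M)
    {Pi : Agent Act Loc (MPolicy Act Loc)} (hPi : Pi ∈ Agent.comps P)
    {σ : List (Act ⊕ Loc)} {Pi' : Agent Act Loc (MPolicy Act Loc)}
    (htr : Trace Pi σ Pi') :
    Sset σ ≤ M.pol :=
  MTypes.Sset_le_of_trace htr (hok.mtypes_of_siteIn hsite htw Pi hPi)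

/-- **Safety for multiset policies**: if `N` is a well-formed system (coherent
and `⊢ N : ok` with multiset well-formedness), then for every trustworthy site
`l[M]{P1|...|Pn}` in `N` where each `Pi` is a thread, `Pi →σ Pi'` implies that
the multiset `Sset(σ)` of labels occurring in `σ` satisfies `Sset(σ) ≤ M_p`. -/
theorem safety_multiset
    {N : System Act Loc (MPolicy Act Loc)}
    (hcoh : Coherent N) (hok : OkM N)
    {l : Loc} {M : Membrane Loc (MPolicy Act Loc)} {P : Agent Act Loc (MPolicy Act Loc)}
    (hsite : SiteIn l M P N) (htw : Trustworthy l M)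
    {Pi : Agent Act Loc (MPolicy Act Loc)} (hPi : Pi ∈ Agent.comps P)
    {σ : List (Act ⊕ Loc)} {Pi' : Agent Act Loc (MPolicy Act Loc)}
    (htr : Trace Pi σ Pi') :
    Sset σ ≤ M.pol :=
  safety_multiset_general hok hsite htw hPi htr
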